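/- arXiv:1402.4069 — 2 statements merged into one kernel-verified Lean document; each statement's English description precedes it below -/
import Mathlib

section
/- Identity of indiscernibles for the Natural Entropy Distance: for positive integers k, m, n and images A, B : Fin k × Fin m → ZMod n, ν̂(A, B) = E(A + (-B)) = 0 if and only if A and B are strongly equivalent, i.e., if and only if A = S + B for some scalar (constant) image S. -/
/-- A scalar image is a constant function. -/
def IsScalarImage {k m n : ℕ} (S : Fin k × Fin m → ZMod n) : Prop :=
  ∃ c : ZMod n, ∀ i, S i = c

/-- The entropy of an image `A : Fin k × Fin m → ZMod n`. -/
noncomputable def imgEntropy {k m n : ℕ} [NeZero n] (A : Fin k × Fin m → ZMod n) : ℝ :=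
  ∑ x : ZMod n,
    Real.negMulLog
      (((Finset.univ.filter (fun i : Fin k × Fin m => A i = x)).card : ℝ) /
        ((k : ℝ) * (m : ℝ)))

/-- Identity of indiscernibles for the Natural Entropy Distance:
`ν̂(A, B) = E(A + (-B)) = 0` if and only if `A` and `B` are strongly
equivalent, i.e. `A = S + B` for some scalar image `S`. -/
theorem ned_eq_zero_iff_strongEquiv (k m n : ℕ) (hk : 0 < k) (hm : 0 < m) [NeZero n]
    (A B : Fin k × Fin m → ZMod n) :
    imgEntropy (A + (-B)) = 0 ↔
      ∃ S : Fin k × Fin m → ZMod n, IsScalarImage S ∧ A = S + B := by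
  set C : Fin k × Fin m → ZMod n := A + (-B) with hC
  have hN : (0 : ℝ) < (k : ℝ) * (m : ℝ) := by positivity
  have hcard : (Finset.univ : Finset (Fin k × Fin m)).card = k * m := by simp
  have hple : ∀ x : ZMod n,
      ((Finset.univ.filter (fun i : Fin k × Fin m => C i = x)).card : ℝ) ≤ (k : ℝ) * (m : ℝ) := by
    intro x
    have := Finset.card_filter_le (Finset.univ : Finset (Fin k × Fin m))
      (fun i : Fin k × Fin m => C i = x)
    rw [hcard] at this
    exact_mod_cast this
  constructor
  · intro h
    have hnonneg : ∀ x ∈ (Finset.univ : Finset (ZMod n)),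
        0 ≤ Real.negMulLog
          (((Finset.univ.filter (fun i : Fin k × Fin m => C i = x)).card : ℝ) /
            ((k : ℝ) * (m : ℝ))) := by
      intro x _
      exact Real.negMulLog_nonneg (by positivity)
        ((div_le_one hN).2 (hple x))
    have hzero := (Finset.sum_eq_zero_iff_of_nonneg hnonneg).1 h
    set i0 : Fin k × Fin m := (⟨0, hk⟩, ⟨0, hm⟩)
    set c : ZMod n := C i0 with hc
    have hz := hzero c (Finset.mem_univ c)
    set p : ℝ := ((Finset.univ.filter (fun i : Fin k × Fin m => C i = c)).card : ℝ) /
        ((k : ℝ) * (m : ℝ)) with hp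
    have hppos : 0 < p := by
      apply div_pos _ hN
      have : i0 ∈ Finset.univ.filter (fun i : Fin k × Fin m => C i = c) := by
        simp [hc]
      have := Finset.card_pos.2 ⟨i0, this⟩
      exact_mod_cast this
    have hp1 : p = 1 := by
      by_contra hne
      have hplt : p < 1 := lt_of_le_of_ne ((div_le_one hN).2 (hple c)) hne
      have hlog : Real.log p < 0 := Real.log_neg hppos hplt
      have : 0 < Real.negMulLog p := by
        unfold Real.negMulLog
        nlinarith
      linarith [this, hz]
    have hall : ∀ i : Fin k × Fin m, C i = c := by
      have hcardeq : (Finset.univ.filter (fun i : Fin k × Fin m => C i = c)).card = k * m := by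
        have : ((Finset.univ.filter (fun i : Fin k × Fin m => C i = c)).card : ℝ)
            = (k : ℝ) * (m : ℝ) := by
          have := (div_eq_one_iff_eq hN.ne').1 hp1
          exact this
        exact_mod_cast this
      have := Finset.eq_univ_of_card _ (hcardeq.trans hcard.symm)
      intro i
      have hi : i ∈ Finset.univ.filter (fun j : Fin k × Fin m => C j = c) := by
        rw [this]; exact Finset.mem_univ i
      simpa using hi
    refine ⟨fun _ => c, ⟨c, fun _ => rfl⟩, funext fun i => ?_⟩
    have := hall i
    simp only [hC, Pi.add_apply, Pi.neg_apply] at this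
    simp [Pi.add_apply]
    linear_combination this
  · rintro ⟨S, ⟨c, hSc⟩, hAB⟩
    have hCc : ∀ i, C i = c := by
      intro i
      simp only [hC, hAB, Pi.add_apply, Pi.neg_apply, hSc]
      ring
    apply Finset.sum_eq_zero
    intro x _
    by_cases hx : x = c
    · subst hx
      have : Finset.univ.filter (fun i : Fin k × Fin m => C i = x) = Finset.univ := by
        apply Finset.eq_univ_of_forall
        intro i; simp [hCc i]
      rw [this, hcard]
      have : ((k * m : ℕ) : ℝ) / ((k : ℝ) * (m : ℝ)) = 1 := by
        push_cast; field_simp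
      rw [this, Real.negMulLog_one]
    · have : Finset.univ.filter (fun i : Fin k × Fin m => C i = x) = ∅ := by
        apply Finset.filter_false_of_mem
        intro i _
        rw [hCc i]
        exact fun h => hx h.symm
      rw [this]
      simp
end

section
/- The Natural Entropy Distance is well defined on equivalence classes of strongly equivalent images: if A₁, A₂, B₁, B₂ : Fin k × Fin m → ZMod n are images with A₁ strongly equivalent to A₂ and B₁ strongly equivalent to B₂, then ν̂(A₁, B₁) = ν̂(A₂, B₂), i.e., E(A₁ + (-B₁)) = E(A₂ + (-B₂)). -/
/-- Images `A` and `B` are strongly equivalent if `A = S + B` for some scalar image `S`. -/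
def StrongEquiv {k m n : ℕ} (A B : Fin k × Fin m → ZMod n) : Prop :=
  ∃ S : Fin k × Fin m → ZMod n, IsScalarImage S ∧ A = S + B

lemma imgEntropy_shift {k m n : ℕ} [NeZero n] (c : ZMod n)
    (f : Fin k × Fin m → ZMod n) :
    imgEntropy (fun i => c + f i) = imgEntropy f := by
  unfold imgEntropy
  apply Fintype.sum_equiv (Equiv.subRight c)
  intro x
  congr 3
  congr 1
  apply Finset.filter_congr
  intro i _
  simp [Equiv.subRight, eq_sub_iff_add_eq, add_comm]

/-- The Natural Entropy Distance is well defined on equivalence classes of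
strongly equivalent images: if `A₁ ≅ A₂` and `B₁ ≅ B₂` then
`ν̂(A₁, B₁) = ν̂(A₂, B₂)`. -/
theorem ned_well_defined (k m n : ℕ) (hk : 0 < k) (hm : 0 < m) [NeZero n]
    (A₁ A₂ B₁ B₂ : Fin k × Fin m → ZMod n)
    (hA : StrongEquiv A₁ A₂) (hB : StrongEquiv B₁ B₂) :
    imgEntropy (A₁ + (-B₁)) = imgEntropy (A₂ + (-B₂)) := by
  obtain ⟨S, ⟨c, hc⟩, rfl⟩ := hA
  obtain ⟨T, ⟨d, hd⟩, rfl⟩ := hB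
  have h : (S + A₂) + (-(T + B₂)) = fun i => (c - d) + (A₂ + (-B₂)) i := by
    funext i
    simp [hc i, hd i]
    ring
  rw [h, imgEntropy_shift]
end
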